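/- The Gaussian mechanism M(x) = f(x) + N(0, σ²) applied to a real-valued query f with sensitivity Δ satisfies μ-GDP with μ = Δ/σ; that is, for all neighboring x, x', the tradeoff function T(M(x), M(x')) equals G_{|f(x)−f(x')|/σ} ≥ G_{Δ/σ}. -/

import Mathlib

open MeasureTheory ProbabilityTheory Real Set Filter
open scoped ENNReal NNReal

/-- Standard normal CDF. -/
noncomputable def Phi (x : ℝ) : ℝ := ((gaussianReal 0 1) (Set.Iic x)).toReal

/-- Inverse of the standard normal CDF (on (0,1)). -/
noncomputable def PhiInv (p : ℝ) : ℝ := sInf {x : ℝ | p ≤ Phi x}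

/-- Gaussian tradeoff function `G_μ`, extended by `G_μ(0)=1`, `G_μ(1)=0`. -/
noncomputable def Gmu (μ α : ℝ) : ℝ :=
  if α ≤ 0 then 1 else if 1 ≤ α then 0 else Phi (PhiInv (1 - α) - μ)

/-- Optimal hypothesis-testing tradeoff function: minimal type-II error over
randomized tests with type-I error at most `α`. -/
noncomputable def tradeoff {Ω : Type*} [MeasurableSpace Ω] (P Q : Measure Ω) (α : ℝ) : ℝ :=
  sInf { b : ℝ | ∃ φ : Ω → ℝ, Measurable φ ∧ (∀ ω, φ ω ∈ Set.Icc (0:ℝ) 1) ∧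
    (∫ ω, φ ω ∂P) ≤ α ∧ b = 1 - ∫ ω, φ ω ∂Q }

/-- Rényi divergence of order `a > 1`. -/
noncomputable def renyiDiv {Ω : Type*} [MeasurableSpace Ω] (a : ℝ) (P Q : Measure Ω) : ℝ :=
  (a - 1)⁻¹ * Real.log (∫ ω, ((Measure.rnDeriv P Q ω).toReal) ^ a ∂Q)

/-- `(ε,δ)`-differential privacy. -/
def IsDP {X Ω : Type*} [MeasurableSpace Ω] (M : X → Measure Ω) (Neighbor : X → X → Prop)
    (ε δ : ℝ) : Prop :=
  ∀ x x', Neighbor x x' → ∀ S : Set Ω, MeasurableSet S →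
    ((M x) S).toReal ≤ Real.exp ε * ((M x') S).toReal + δ

/-- `ρ`-zero-concentrated differential privacy. -/
def IsZCDP {X Ω : Type*} [MeasurableSpace Ω] (M : X → Measure Ω) (Neighbor : X → X → Prop)
    (ρ : ℝ) : Prop :=
  ∀ x x', Neighbor x x' → ∀ a : ℝ, 1 < a → renyiDiv a (M x) (M x') ≤ ρ * a

/-- `μ`-Gaussian differential privacy. -/
def IsGDP {X Ω : Type*} [MeasurableSpace Ω] (M : X → Measure Ω) (Neighbor : X → X → Prop)
    (μ : ℝ) : Prop :=
  ∀ x x', Neighbor x x' → ∀ α ∈ Set.Icc (0:ℝ) 1, Gmu μ α ≤ tradeoff (M x) (M x') α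

lemma Phi_eq_integral (x : ℝ) : Phi x = ∫ t in Set.Iic x, gaussianPDFReal 0 1 t := by
  rw [Phi, gaussianReal_apply_eq_integral 0 one_ne_zero, ENNReal.toReal_ofReal]
  exact setIntegral_nonneg measurableSet_Iic fun t _ => gaussianPDFReal_nonneg 0 1 t

lemma pdf01_le_one (t : ℝ) : gaussianPDFReal 0 1 t ≤ 1 := by
  rw [gaussianPDFReal]
  have h1 : (1:ℝ) ≤ √(2 * π * (1:ℝ≥0)) := by
    rw [show ((1:ℝ≥0):ℝ) = 1 by norm_num, mul_one]
    rw [show (1:ℝ) = √1 by simp]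
    exact Real.sqrt_le_sqrt (by nlinarith [Real.pi_gt_three])
  have h2 : rexp (-(t - 0)^2 / (2 * (1:ℝ≥0))) ≤ 1 := by
    rw [Real.exp_le_one_iff]
    have : (0:ℝ) ≤ (t-0)^2 := sq_nonneg _
    have h20 : (0:ℝ) < 2 * (1:ℝ≥0) := by norm_num
    exact div_nonpos_of_nonpos_of_nonneg (by linarith) h20.le
  calc (√(2 * π * (1:ℝ≥0)))⁻¹ * rexp (-(t - 0)^2 / (2 * (1:ℝ≥0)))
      ≤ 1 * 1 := by
        apply mul_le_mul _ h2 (le_of_lt (Real.exp_pos _)) zero_le_one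
        exact inv_le_one_of_one_le₀ h1
    _ = 1 := by ring

lemma Phi_strictMono : StrictMono Phi := by
  intro x y hxy
  rw [Phi_eq_integral, Phi_eq_integral]
  have hd : Set.Iic y = Set.Iic x ∪ Set.Ioc x y := by
    rw [Set.Iic_union_Ioc_eq_Iic hxy.le]
  rw [hd, setIntegral_union (by rw [Set.disjoint_iff]; intro t ⟨h1, h2⟩; exact absurd h1 (not_le.2 h2.1))
      measurableSet_Ioc ((integrable_gaussianPDFReal 0 1).restrict)
      ((integrable_gaussianPDFReal 0 1).restrict)]
  have : 0 < ∫ t in Set.Ioc x y, gaussianPDFReal 0 1 t := by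
    rw [setIntegral_pos_iff_support_of_nonneg_ae
      (ae_of_all _ fun t => gaussianPDFReal_nonneg 0 1 t) ((integrable_gaussianPDFReal 0 1).restrict)]
    have : Function.support (gaussianPDFReal 0 1) = Set.univ := by
      ext t; simp [Function.mem_support, (gaussianPDFReal_pos 0 1 t one_ne_zero).ne']
    rw [this, Set.univ_inter]
    simp [Real.volume_Ioc, hxy]
  linarith

lemma Phi_lipschitz : LipschitzWith 1 Phi := by
  have key : ∀ x y : ℝ, x ≤ y → Phi y - Phi x ≤ y - x := by
    intro x y hxy
    rw [Phi_eq_integral, Phi_eq_integral,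
      show Set.Iic y = Set.Iic x ∪ Set.Ioc x y by rw [Set.Iic_union_Ioc_eq_Iic hxy],
      setIntegral_union (by rw [Set.disjoint_iff]; intro t ⟨h1, h2⟩; exact absurd h1 (not_le.2 h2.1))
      measurableSet_Ioc ((integrable_gaussianPDFReal 0 1).restrict)
      ((integrable_gaussianPDFReal 0 1).restrict)]
    have : ∫ t in Set.Ioc x y, gaussianPDFReal 0 1 t ≤ ∫ _t in Set.Ioc x y, (1:ℝ) := by
      apply setIntegral_mono_on ((integrable_gaussianPDFReal 0 1).restrict)
        (integrableOn_const (by simp) (by simp)) measurableSet_Ioc fun t _ => pdf01_le_one t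
    simp only [setIntegral_const, measureReal_def, Real.volume_Ioc, smul_eq_mul, mul_one] at this
    rw [ENNReal.toReal_ofReal (by linarith)] at this
    linarith
  apply LipschitzWith.of_dist_le_mul
  intro x y
  rw [Real.dist_eq, Real.dist_eq, NNReal.coe_one, one_mul]
  rcases le_total x y with h | h
  · rw [abs_sub_comm, abs_sub_comm x y, abs_of_nonneg (sub_nonneg.2 (Phi_strictMono.monotone h)),
      abs_of_nonneg (sub_nonneg.2 h)]
    linarith [key x y h]
  · rw [abs_of_nonneg (sub_nonneg.2 (Phi_strictMono.monotone h)), abs_of_nonneg (sub_nonneg.2 h)]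
    linarith [key y x h]

lemma Phi_continuous : Continuous Phi := Phi_lipschitz.continuous

lemma Phi_nonneg (x : ℝ) : 0 ≤ Phi x := ENNReal.toReal_nonneg

lemma Phi_le_one (x : ℝ) : Phi x ≤ 1 := by
  rw [Phi]
  have h := measure_mono (Set.subset_univ (Set.Iic x)) (μ := gaussianReal 0 1)
  rw [measure_univ] at h
  calc ((gaussianReal 0 1) (Set.Iic x)).toReal ≤ (1:ℝ≥0∞).toReal :=
    ENNReal.toReal_mono (by norm_num) h
  _ = 1 := by simp

lemma Phi_tendsto_atTop : Tendsto Phi atTop (nhds 1) := by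
  have h := tendsto_measure_Iic_atTop (gaussianReal 0 1)
  rw [measure_univ] at h
  have := (ENNReal.tendsto_toReal (by norm_num : (1:ℝ≥0∞) ≠ ⊤)).comp h
  exact this

lemma pdf01_even (t : ℝ) : gaussianPDFReal 0 1 (-t) = gaussianPDFReal 0 1 t := by
  simp [gaussianPDFReal]

lemma integral_pdf01 : ∫ t, gaussianPDFReal 0 1 t = 1 :=
  integral_gaussianPDFReal_eq_one 0 one_ne_zero

lemma Phi_neg (x : ℝ) : Phi (-x) = 1 - Phi x := by
  have h1 : Phi (-x) = ∫ t in Set.Ioi x, gaussianPDFReal 0 1 t := by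
    rw [Phi_eq_integral,
      show (∫ t in Set.Iic (-x), gaussianPDFReal 0 1 t)
        = ∫ t in Set.Iic (-x), gaussianPDFReal 0 1 (-t) from
        integral_congr_ae (ae_of_all _ fun t => (pdf01_even t).symm),
      integral_comp_neg_Iic, neg_neg]
  have h3 : Phi x + ∫ t in Set.Ioi x, gaussianPDFReal 0 1 t = 1 := by
    rw [Phi_eq_integral, show Set.Ioi x = (Set.Iic x)ᶜ from Set.compl_Iic.symm]
    rw [integral_add_compl measurableSet_Iic (integrable_gaussianPDFReal 0 1)]
    exact integral_pdf01
  rw [h1]; linarith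

lemma Phi_tendsto_atBot : Tendsto Phi atBot (nhds 0) := by
  have h : Tendsto (fun x : ℝ => 1 - Phi (-x)) atBot (nhds (1 - 1)) :=
    (tendsto_const_nhds).sub (Phi_tendsto_atTop.comp tendsto_neg_atBot_atTop)
  norm_num at h
  refine h.congr fun x => ?_
  rw [Phi_neg]; ring

lemma exists_Phi_eq {p : ℝ} (hp : p ∈ Set.Ioo (0:ℝ) 1) : ∃ x, Phi x = p := by
  obtain ⟨a, ha⟩ : ∃ a, Phi a < p :=
    (Phi_tendsto_atBot.eventually_lt_const hp.1).exists
  obtain ⟨b, hb⟩ : ∃ b, p < Phi b :=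
    (Phi_tendsto_atTop.eventually_const_lt hp.2).exists
  rcases le_total a b with hab | hab
  · obtain ⟨x, _, hx⟩ := intermediate_value_Icc hab Phi_continuous.continuousOn
      (⟨ha.le, hb.le⟩ : p ∈ Set.Icc (Phi a) (Phi b))
    exact ⟨x, hx⟩
  · exact absurd (Phi_strictMono.monotone hab) (not_le.2 (lt_trans ha hb))

lemma PhiInv_eq_of_Phi_eq {p x₀ : ℝ} (h : Phi x₀ = p) : PhiInv p = x₀ := by
  have hset : {x : ℝ | p ≤ Phi x} = Set.Ici x₀ := by
    ext x
    simp only [Set.mem_setOf_eq, Set.mem_Ici]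
    constructor
    · intro hx
      by_contra hlt
      exact absurd (h ▸ Phi_strictMono (not_le.1 hlt)) (not_lt.2 hx)
    · intro hx
      exact h ▸ Phi_strictMono.monotone hx
  rw [PhiInv, hset, csInf_Ici]

lemma Phi_PhiInv {p : ℝ} (hp : p ∈ Set.Ioo (0:ℝ) 1) : Phi (PhiInv p) = p := by
  obtain ⟨x₀, hx₀⟩ := exists_Phi_eq hp
  rw [PhiInv_eq_of_Phi_eq hx₀, hx₀]

lemma PhiInv_one_sub {p : ℝ} (hp : p ∈ Set.Ioo (0:ℝ) 1) : PhiInv (1 - p) = -PhiInv p := by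
  apply PhiInv_eq_of_Phi_eq
  rw [Phi_neg, Phi_PhiInv hp]

lemma integral_gaussianReal_pdf (m : ℝ) {v : ℝ≥0} (hv : v ≠ 0) (g : ℝ → ℝ) :
    ∫ x, g x ∂(gaussianReal m v) = ∫ x, gaussianPDFReal m v x * g x := by
  rw [gaussianReal_of_var_ne_zero m hv]
  have hd : gaussianPDF m v = fun x => ((Real.toNNReal (gaussianPDFReal m v x) : ℝ≥0) : ℝ≥0∞) :=
    rfl
  rw [hd, integral_withDensity_eq_integral_smul
    ((measurable_gaussianPDFReal m v).real_toNNReal) g]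
  congr 1
  funext x
  rw [NNReal.smul_def, Real.coe_toNNReal _ (gaussianPDFReal_nonneg m v x), smul_eq_mul]

lemma gaussianReal_map_affine (m σ : ℝ) (hσ : 0 < σ) :
    (gaussianReal 0 1).map (fun x => σ * x + m) = gaussianReal m (σ ^ 2).toNNReal := by
  have h1 : (gaussianReal 0 1).map (fun x => σ * x) = gaussianReal 0 (σ ^ 2).toNNReal := by
    have := gaussianReal_map_const_mul (μ := 0) (v := 1) σ
    simp only [mul_zero] at this
    convert this using 2
    ext
    simp [Real.coe_toNNReal _ (sq_nonneg σ)]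
  have h2 : ((gaussianReal 0 1).map (fun x => σ * x)).map (fun x => x + m)
      = gaussianReal m (σ ^ 2).toNNReal := by
    rw [h1]
    have := gaussianReal_map_add_const (μ := 0) (v := (σ ^ 2).toNNReal) m
    simpa using this
  rw [← h2, Measure.map_map (measurable_add_const m) (measurable_const_mul σ)]
  rfl

lemma gaussianReal_Iic (m σ t : ℝ) (hσ : 0 < σ) :
    ((gaussianReal m (σ ^ 2).toNNReal) (Set.Iic t)).toReal = Phi ((t - m) / σ) := by
  rw [← gaussianReal_map_affine m σ hσ,
    Measure.map_apply (by fun_prop) measurableSet_Iic]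
  have : (fun x => σ * x + m) ⁻¹' Set.Iic t = Set.Iic ((t - m) / σ) := by
    ext x
    simp only [Set.mem_preimage, Set.mem_Iic]
    rw [le_div_iff₀ hσ]
    constructor <;> intro h <;> nlinarith
  rw [this, Phi]

lemma gaussianReal_singleton (m : ℝ) {v : ℝ≥0} (hv : v ≠ 0) (t : ℝ) :
    (gaussianReal m v) {t} = 0 :=
  gaussianReal_absolutelyContinuous m hv (volume_singleton)

lemma gaussianReal_Ici (m σ t : ℝ) (hσ : 0 < σ) :
    ((gaussianReal m (σ ^ 2).toNNReal) (Set.Ici t)).toReal = 1 - Phi ((t - m) / σ) := by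
  set P := gaussianReal m (σ ^ 2).toNNReal with hP
  have hv : (σ ^ 2).toNNReal ≠ 0 := by
    simp only [ne_eq, Real.toNNReal_eq_zero, not_le]
    positivity
  have h1 : P (Set.Ici t) = P (Set.Ioi t) :=
    (measure_congr (MeasureTheory.Ioi_ae_eq_Ici' (gaussianReal_singleton m hv t))).symm
  have h2 : P (Set.Ioi t) = 1 - P (Set.Iic t) := by
    rw [show Set.Ioi t = (Set.Iic t)ᶜ from Set.compl_Iic.symm,
      prob_compl_eq_one_sub measurableSet_Iic]
  rw [h1, h2, ENNReal.toReal_sub_of_le prob_le_one ENNReal.one_ne_top, ENNReal.toReal_one,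
    ← gaussianReal_Iic m σ t hσ]

lemma np_lemma {p q : ℝ → ℝ} (hpm : Measurable p) (hqm : Measurable q)
    (hp0 : ∀ x, 0 ≤ p x) (hq0 : ∀ x, 0 ≤ q x)
    (hpi : Integrable p) (hqi : Integrable q)
    {S : Set ℝ} (hS : MeasurableSet S) {c : ℝ} (hc : 0 ≤ c)
    (h1 : ∀ x ∈ S, c * p x ≤ q x) (h2 : ∀ x ∉ S, q x ≤ c * p x)
    {φ : ℝ → ℝ} (hφm : Measurable φ) (hφ01 : ∀ x, φ x ∈ Set.Icc (0:ℝ) 1)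
    (hφα : ∫ x, φ x * p x ≤ ∫ x in S, p x) :
    ∫ x, φ x * q x ≤ ∫ x in S, q x := by
  set ψ : ℝ → ℝ := S.indicator (fun _ => (1:ℝ)) with hψ
  have hψ01 : ∀ x, ψ x ∈ Set.Icc (0:ℝ) 1 := by
    intro x
    by_cases hx : x ∈ S <;> simp [hψ, hx]
  have mono_int : ∀ {f g : ℝ → ℝ}, Measurable f → (∀ x, f x ∈ Set.Icc (0:ℝ) 1) →
      Measurable g → (∀ x, 0 ≤ g x) → Integrable g → Integrable (fun x => f x * g x) := by
    intro f g hfm hf01 hgm hg0 hgi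
    refine hgi.mono' ((hfm.mul hgm).aestronglyMeasurable) (ae_of_all _ fun x => ?_)
    rw [Real.norm_eq_abs, abs_of_nonneg (mul_nonneg (hf01 x).1 (hg0 x))]
    exact mul_le_of_le_one_left (hg0 x) (hf01 x).2
  have hψm : Measurable ψ := measurable_const.indicator hS
  have hφq := mono_int hφm hφ01 hqm hq0 hqi
  have hφp := mono_int hφm hφ01 hpm hp0 hpi
  have hψq := mono_int hψm hψ01 hqm hq0 hqi
  have hψp := mono_int hψm hψ01 hpm hp0 hpi
  have heqq : ∫ x, ψ x * q x = ∫ x in S, q x := by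
    rw [show (fun x => ψ x * q x) = S.indicator q from
      funext fun x => by by_cases hx : x ∈ S <;> simp [hψ, hx], integral_indicator hS]
  have heqp : ∫ x, ψ x * p x = ∫ x in S, p x := by
    rw [show (fun x => ψ x * p x) = S.indicator p from
      funext fun x => by by_cases hx : x ∈ S <;> simp [hψ, hx], integral_indicator hS]
  have key : ∀ x, 0 ≤ (ψ x - φ x) * (q x - c * p x) := by
    intro x
    by_cases hx : x ∈ S
    · have : ψ x = 1 := by simp [hψ, hx]
      exact mul_nonneg (by rw [this]; linarith [(hφ01 x).2]) (by linarith [h1 x hx])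
    · have : ψ x = 0 := by simp [hψ, hx]
      exact mul_nonneg_iff.2 (Or.inr ⟨by rw [this]; linarith [(hφ01 x).1],
        by linarith [h2 x hx]⟩)
  have hIpos : 0 ≤ ∫ x, (ψ x - φ x) * (q x - c * p x) := integral_nonneg key
  have hIeq : ∫ x, (ψ x - φ x) * (q x - c * p x)
      = ((∫ x, ψ x * q x) - ∫ x, φ x * q x) - c * ((∫ x, ψ x * p x) - ∫ x, φ x * p x) := by
    have A : Integrable (fun x => ψ x * q x - φ x * q x) := hψq.sub hφq
    have B : Integrable (fun x => c * (ψ x * p x - φ x * p x)) := (hψp.sub hφp).const_mul c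
    have C : Integrable (fun x => ψ x * p x - φ x * p x) := hψp.sub hφp
    rw [show (fun x => (ψ x - φ x) * (q x - c * p x))
        = fun x => (ψ x * q x - φ x * q x) - c * (ψ x * p x - φ x * p x) from
      funext fun x => by ring]
    rw [integral_sub A B, integral_sub hψq hφq, integral_const_mul, integral_sub hψp hφp]
  rw [hIeq, heqq, heqp] at hIpos
  nlinarith [mul_nonneg hc (sub_nonneg.2 hφα)]

lemma coe_toNNReal_sq (σ : ℝ) (hσ : 0 < σ) : (((σ ^ 2).toNNReal : ℝ≥0) : ℝ) = σ ^ 2 :=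
  Real.coe_toNNReal _ (sq_nonneg σ)

lemma toNNReal_sq_ne_zero {σ : ℝ} (hσ : 0 < σ) : (σ ^ 2).toNNReal ≠ 0 := by
  simp only [ne_eq, Real.toNNReal_eq_zero, not_le]
  positivity

lemma gaussian_ratio_mono {a b σ : ℝ} (hσ : 0 < σ) (hab : a ≤ b) {s u : ℝ} (hsu : s ≤ u) :
    gaussianPDFReal b (σ ^ 2).toNNReal s * gaussianPDFReal a (σ ^ 2).toNNReal u
      ≤ gaussianPDFReal a (σ ^ 2).toNNReal s * gaussianPDFReal b (σ ^ 2).toNNReal u := by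
  simp only [gaussianPDFReal, coe_toNNReal_sq σ hσ]
  have hC : (0:ℝ) < (√(2 * π * σ ^ 2))⁻¹ := by
    rw [inv_pos]
    apply Real.sqrt_pos.2
    have := Real.pi_pos
    positivity
  have h2σ : (0:ℝ) < 2 * σ ^ 2 := by positivity
  have key : rexp (-(s - b) ^ 2 / (2 * σ ^ 2)) * rexp (-(u - a) ^ 2 / (2 * σ ^ 2))
      ≤ rexp (-(s - a) ^ 2 / (2 * σ ^ 2)) * rexp (-(u - b) ^ 2 / (2 * σ ^ 2)) := by
    rw [← Real.exp_add, ← Real.exp_add, Real.exp_le_exp, ← add_div, ← add_div,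
      div_le_div_iff_of_pos_right h2σ]
    nlinarith [mul_nonneg (sub_nonneg.2 hab) (sub_nonneg.2 hsu)]
  nlinarith [mul_le_mul_of_nonneg_left key (sq_nonneg (√(2 * π * σ ^ 2))⁻¹), hC.le,
    Real.exp_pos (-(s - b) ^ 2 / (2 * σ ^ 2)), Real.exp_pos (-(u - a) ^ 2 / (2 * σ ^ 2))]

lemma integrable_test_prob {μ : Measure ℝ} [IsProbabilityMeasure μ] {φ : ℝ → ℝ}
    (hφm : Measurable φ) (hφ01 : ∀ x, φ x ∈ Set.Icc (0:ℝ) 1) : Integrable φ μ := by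
  refine (integrable_const (1:ℝ)).mono' hφm.aestronglyMeasurable (ae_of_all _ fun x => ?_)
  rw [Real.norm_eq_abs, abs_of_nonneg (hφ01 x).1]
  exact (hφ01 x).2

lemma test_integral_le_one {μ : Measure ℝ} [IsProbabilityMeasure μ] {φ : ℝ → ℝ}
    (hφm : Measurable φ) (hφ01 : ∀ x, φ x ∈ Set.Icc (0:ℝ) 1) : ∫ x, φ x ∂μ ≤ 1 := by
  calc ∫ x, φ x ∂μ ≤ ∫ _x, (1:ℝ) ∂μ :=
    integral_mono (integrable_test_prob hφm hφ01) (integrable_const 1) fun x => (hφ01 x).2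
  _ = 1 := by simp

lemma setIntegral_pdf_eq (m : ℝ) {v : ℝ≥0} (hv : v ≠ 0) {S : Set ℝ} :
    ∫ x in S, gaussianPDFReal m v x = ((gaussianReal m v) S).toReal := by
  rw [gaussianReal_apply_eq_integral m hv, ENNReal.toReal_ofReal
    (integral_nonneg fun t => gaussianPDFReal_nonneg m v t)]

lemma tradeoff_core (m₁ m₂ σ : ℝ) (hσ : 0 < σ) {α : ℝ} (hα : α ∈ Set.Ioo (0:ℝ) 1) :
    ∃ S : Set ℝ, MeasurableSet S ∧
      (∫ x in S, gaussianPDFReal m₁ (σ ^ 2).toNNReal x) = α ∧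
      (∫ x in S, gaussianPDFReal m₂ (σ ^ 2).toNNReal x) = 1 - Gmu (|m₁ - m₂| / σ) α ∧
      ∃ c : ℝ, 0 ≤ c ∧
        (∀ x ∈ S, c * gaussianPDFReal m₁ (σ ^ 2).toNNReal x
          ≤ gaussianPDFReal m₂ (σ ^ 2).toNNReal x) ∧
        (∀ x ∉ S, gaussianPDFReal m₂ (σ ^ 2).toNNReal x
          ≤ c * gaussianPDFReal m₁ (σ ^ 2).toNNReal x) := by
  obtain ⟨hα0, hα1⟩ := hα
  have hv := toNNReal_sq_ne_zero hσ
  set p := gaussianPDFReal m₁ (σ ^ 2).toNNReal with hp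
  set q := gaussianPDFReal m₂ (σ ^ 2).toNNReal with hq
  have hppos : ∀ x, 0 < p x := fun x => gaussianPDFReal_pos _ _ x hv
  have hqpos : ∀ x, 0 < q x := fun x => gaussianPDFReal_pos _ _ x hv
  have hGmu : Gmu (|m₁ - m₂| / σ) α = Phi (PhiInv (1 - α) - |m₁ - m₂| / σ) := by
    rw [Gmu, if_neg (not_le.2 hα0), if_neg (not_le.2 hα1)]
  have h1α : (1 - α) ∈ Set.Ioo (0:ℝ) 1 := ⟨by linarith, by linarith⟩
  rcases le_or_gt m₁ m₂ with hm | hm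
  · -- m₁ ≤ m₂ : use S = Ici t
    set t := m₁ + σ * PhiInv (1 - α) with ht
    have htm : (t - m₁) / σ = PhiInv (1 - α) := by rw [ht, add_sub_cancel_left, mul_div_cancel_left₀ _ hσ.ne']
    have habs : |m₁ - m₂| = m₂ - m₁ := by rw [abs_of_nonpos (by linarith)]; ring
    refine ⟨Set.Ici t, measurableSet_Ici, ?_, ?_, q t / p t,
      div_nonneg (hqpos t).le (hppos t).le, ?_, ?_⟩
    · rw [hp, setIntegral_pdf_eq m₁ hv, gaussianReal_Ici m₁ σ t hσ, htm, Phi_PhiInv h1α]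
      ring
    · rw [hq, setIntegral_pdf_eq m₂ hv, gaussianReal_Ici m₂ σ t hσ, hGmu]
      have : (t - m₂) / σ = PhiInv (1 - α) - |m₁ - m₂| / σ := by
        rw [habs, ht]; field_simp; ring
      rw [this]
    · intro x hx
      have hr := gaussian_ratio_mono hσ hm (Set.mem_Ici.1 hx)
      rw [div_mul_eq_mul_div, div_le_iff₀ (hppos t)]
      nlinarith [hr]
    · intro x hx
      have hr := gaussian_ratio_mono hσ hm (le_of_lt (not_le.1 hx))
      rw [div_mul_eq_mul_div, le_div_iff₀ (hppos t)]
      nlinarith [hr]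
  · -- m₂ < m₁ : use S = Iic t
    set t := m₁ + σ * PhiInv α with ht
    have htm : (t - m₁) / σ = PhiInv α := by rw [ht, add_sub_cancel_left, mul_div_cancel_left₀ _ hσ.ne']
    have habs : |m₁ - m₂| = m₁ - m₂ := abs_of_pos (by linarith)
    refine ⟨Set.Iic t, measurableSet_Iic, ?_, ?_, q t / p t,
      div_nonneg (hqpos t).le (hppos t).le, ?_, ?_⟩
    · rw [hp, setIntegral_pdf_eq m₁ hv, gaussianReal_Iic m₁ σ t hσ, htm,
        Phi_PhiInv ⟨hα0, hα1⟩]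
    · rw [hq, setIntegral_pdf_eq m₂ hv, gaussianReal_Iic m₂ σ t hσ, hGmu]
      have h2 : (t - m₂) / σ = PhiInv α + |m₁ - m₂| / σ := by
        rw [habs, ht]; field_simp; ring
      have h3 : PhiInv (1 - α) - |m₁ - m₂| / σ = -(PhiInv α + |m₁ - m₂| / σ) := by
        rw [PhiInv_one_sub ⟨hα0, hα1⟩]; ring
      rw [h2, h3, Phi_neg]
      ring
    · intro x hx
      have hr := gaussian_ratio_mono hσ hm.le (Set.mem_Iic.1 hx)
      rw [div_mul_eq_mul_div, div_le_iff₀ (hppos t)]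
      nlinarith [hr]
    · intro x hx
      have hr := gaussian_ratio_mono hσ hm.le (le_of_lt (not_le.1 hx))
      rw [div_mul_eq_mul_div, le_div_iff₀ (hppos t)]
      nlinarith [hr]

lemma integral_test_pdf (m : ℝ) {v : ℝ≥0} (hv : v ≠ 0) (φ : ℝ → ℝ) :
    ∫ x, φ x ∂(gaussianReal m v) = ∫ x, φ x * gaussianPDFReal m v x := by
  rw [integral_gaussianReal_pdf m hv φ]
  exact integral_congr_ae (ae_of_all _ fun x => mul_comm _ _)

lemma integrable_mul_test {g φ : ℝ → ℝ} (hgm : Measurable g) (hgi : Integrable g)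
    (hg0 : ∀ x, 0 ≤ g x) (hφm : Measurable φ) (hφ01 : ∀ x, φ x ∈ Set.Icc (0:ℝ) 1) :
    Integrable (fun x => φ x * g x) := by
  refine hgi.mono' ((hφm.mul hgm).aestronglyMeasurable) (ae_of_all _ fun x => ?_)
  rw [Real.norm_eq_abs, abs_of_nonneg (mul_nonneg (hφ01 x).1 (hg0 x))]
  exact mul_le_of_le_one_left (hg0 x) (hφ01 x).2

lemma tradeoff_gaussian (m₁ m₂ σ : ℝ) (hσ : 0 < σ) {α : ℝ} (hα : α ∈ Set.Icc (0:ℝ) 1) :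
    tradeoff (gaussianReal m₁ (σ ^ 2).toNNReal) (gaussianReal m₂ (σ ^ 2).toNNReal) α
      = Gmu (|m₁ - m₂| / σ) α := by
  have hv := toNNReal_sq_ne_zero hσ
  set P := gaussianReal m₁ (σ ^ 2).toNNReal with hP
  set Q := gaussianReal m₂ (σ ^ 2).toNNReal with hQ
  set p := gaussianPDFReal m₁ (σ ^ 2).toNNReal with hp
  set q := gaussianPDFReal m₂ (σ ^ 2).toNNReal with hq
  have hpm : Measurable p := measurable_gaussianPDFReal _ _
  have hqm : Measurable q := measurable_gaussianPDFReal _ _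
  have hp0 : ∀ x, 0 ≤ p x := fun x => gaussianPDFReal_nonneg _ _ x
  have hq0 : ∀ x, 0 ≤ q x := fun x => gaussianPDFReal_nonneg _ _ x
  have hppos : ∀ x, 0 < p x := fun x => gaussianPDFReal_pos _ _ x hv
  have hpi : Integrable p := integrable_gaussianPDFReal _ _
  have hqi : Integrable q := integrable_gaussianPDFReal _ _
  set B := { b : ℝ | ∃ φ : ℝ → ℝ, Measurable φ ∧ (∀ ω, φ ω ∈ Set.Icc (0:ℝ) 1) ∧
    (∫ ω, φ ω ∂P) ≤ α ∧ b = 1 - ∫ ω, φ ω ∂Q } with hB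
  have hBdd : BddBelow B := by
    refine ⟨0, fun b hb => ?_⟩
    obtain ⟨φ, hφm, hφ01, _, hbeq⟩ := hb
    have := test_integral_le_one (μ := Q) hφm hφ01
    linarith
  have hBne : B.Nonempty := by
    refine ⟨1 - α, fun _ => α, measurable_const, fun _ => hα, ?_, ?_⟩
    · rw [integral_const]; simp
    · rw [integral_const]; simp
  have htr : tradeoff P Q α = sInf B := rfl
  rw [htr]
  rcases eq_or_lt_of_le hα.1 with hα0 | hα0
  · -- α = 0
    have hGmu : Gmu (|m₁ - m₂| / σ) α = 1 := by rw [Gmu, if_pos (le_of_eq hα0.symm)]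
    rw [hGmu]
    apply le_antisymm
    · apply csInf_le hBdd
      refine ⟨fun _ => 0, measurable_const, fun _ => by simp, ?_, by simp⟩
      simp [← hα0]
    · apply le_csInf hBne
      rintro b ⟨φ, hφm, hφ01, hφα, rfl⟩
      rw [hP, integral_test_pdf m₁ hv φ, ← hp, ← hα0] at hφα
      have hint : Integrable (fun x => φ x * p x) :=
        integrable_mul_test hpm hpi hp0 hφm hφ01
      have hnn : ∀ x, 0 ≤ φ x * p x := fun x => mul_nonneg (hφ01 x).1 (hp0 x)
      have hz : ∫ x, φ x * p x = 0 := le_antisymm hφα (integral_nonneg hnn)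
      have hae : (fun x => φ x * p x) =ᵐ[volume] 0 :=
        (integral_eq_zero_iff_of_nonneg hnn hint).1 hz
      have haeφ : (fun x => φ x * q x) =ᵐ[volume] 0 := by
        filter_upwards [hae] with x hx
        have hφ0 : φ x = 0 := by
          by_contra hc
          exact hc (by
            have := hx
            simp only [Pi.zero_apply] at this
            rcases mul_eq_zero.1 this with h | h
            · exact h
            · exact absurd h (hppos x).ne')
        simp [hφ0]
      have : ∫ x, φ x ∂Q = 0 := by
        rw [hQ, integral_test_pdf m₂ hv φ, ← hq, integral_congr_ae haeφ]
        simp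
      rw [this]
      norm_num
  · rcases eq_or_lt_of_le hα.2 with hα1 | hα1
    · -- α = 1
      have hGmu : Gmu (|m₁ - m₂| / σ) α = 0 := by
        rw [Gmu, if_neg (not_le.2 hα0), if_pos (le_of_eq hα1.symm)]
      rw [hGmu]
      apply le_antisymm
      · apply csInf_le hBdd
        refine ⟨fun _ => 1, measurable_const, fun _ => by simp, ?_, by simp⟩
        rw [integral_const]; simp [hα1]
      · apply le_csInf hBne
        rintro b ⟨φ, hφm, hφ01, _, rfl⟩
        have := test_integral_le_one (μ := Q) hφm hφ01
        linarith
    · -- 0 < α < 1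
      obtain ⟨S, hS, hSp, hSq, c, hc, h1, h2⟩ := tradeoff_core m₁ m₂ σ hσ ⟨hα0, hα1⟩
      apply le_antisymm
      · apply csInf_le hBdd
        set φ : ℝ → ℝ := S.indicator (fun _ => 1) with hφ
        have hφm : Measurable φ := measurable_const.indicator hS
        have hφ01 : ∀ x, φ x ∈ Set.Icc (0:ℝ) 1 := by
          intro x; by_cases hx : x ∈ S <;> simp [hφ, hx]
        have hpphi : ∀ (g : ℝ → ℝ), (fun x => φ x * g x) = S.indicator g := by
          intro g; funext x; by_cases hx : x ∈ S <;> simp [hφ, hx]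
        refine ⟨φ, hφm, hφ01, ?_, ?_⟩
        · rw [hP, integral_test_pdf m₁ hv φ, ← hp, hpphi p, integral_indicator hS, hSp]
        · rw [hQ, integral_test_pdf m₂ hv φ, ← hq, hpphi q, integral_indicator hS, hSq]
          ring
      · apply le_csInf hBne
        rintro b ⟨φ, hφm, hφ01, hφα, rfl⟩
        rw [hP, integral_test_pdf m₁ hv φ, ← hp] at hφα
        have hnp := np_lemma hpm hqm hp0 hq0 hpi hqi hS hc h1 h2 hφm hφ01
          (by rw [hSp]; exact hφα)
        rw [hSq] at hnp
        rw [hQ, integral_test_pdf m₂ hv φ, ← hq]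
        linarith

lemma Gmu_mono {mu1 mu2 α : ℝ} (h : mu1 ≤ mu2) : Gmu mu2 α ≤ Gmu mu1 α := by
  rw [Gmu, Gmu]
  split_ifs with h1 h2
  · exact le_refl 1
  · exact le_refl 0
  · exact Phi_strictMono.monotone (by linarith)

/-- The Gaussian mechanism with sensitivity `Δ` and noise scale `σ` satisfies
`(Δ/σ)`-GDP: its tradeoff function on neighboring datasets equals
`G_{|f(x)-f(x')|/σ}`, which dominates `G_{Δ/σ}`. -/
theorem gaussian_mechanism_gdp {X : Type*} (f : X → ℝ) (Neighbor : X → X → Prop)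
    (σ Δ : ℝ) (hσ : 0 < σ)
    (hΔ : ∀ x x', Neighbor x x' → |f x - f x'| ≤ Δ)
    (M : X → Measure ℝ)
    (hM : ∀ x, M x = gaussianReal (f x) ((σ ^ 2).toNNReal)) :
    (∀ x x', Neighbor x x' → ∀ α ∈ Set.Icc (0:ℝ) 1,
      tradeoff (M x) (M x') α = Gmu (|f x - f x'| / σ) α ∧
      Gmu (Δ / σ) α ≤ tradeoff (M x) (M x') α) ∧
    IsGDP M Neighbor (Δ / σ) := by
  have hdiv : ∀ x x', Neighbor x x' → |f x - f x'| / σ ≤ Δ / σ := by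
    intro x x' hN
    gcongr
    exact hΔ x x' hN
  have main : ∀ x x', Neighbor x x' → ∀ α ∈ Set.Icc (0:ℝ) 1,
      tradeoff (M x) (M x') α = Gmu (|f x - f x'| / σ) α := by
    intro x x' _hN α hα
    rw [hM x, hM x']
    exact tradeoff_gaussian (f x) (f x') σ hσ hα
  constructor
  · intro x x' hN α hα
    refine ⟨main x x' hN α hα, ?_⟩
    rw [main x x' hN α hα]
    exact Gmu_mono (hdiv x x' hN)
  · intro x x' hN α hα
    rw [main x x' hN α hα]
    exact Gmu_mono (hdiv x x' hN)
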